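/- arXiv:1708.07203 — 2 statements merged into one kernel-verified Lean document; each statement's English description precedes it below -/
import Mathlib

section
/- For every integer n ≥ 2, the quantity c_n = √2 · Γ((n+1)/2) / Γ(n/2) satisfies √(n−1) ≤ c_n ≤ √n; equivalently, ((n−1)/2) · Γ(n/2)² ≤ Γ((n+1)/2)² ≤ (n/2) · Γ(n/2)². -/
lemma gamma_sq_midpoint_le (x y : ℝ) (hx : 0 < x) (hy : 0 < y) :
    Real.Gamma ((x + y) / 2) ^ 2 ≤ Real.Gamma x * Real.Gamma y := by
  have h := Real.convexOn_log_Gamma.2 (Set.mem_Ioi.mpr hx) (Set.mem_Ioi.mpr hy)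
    (by norm_num : (0:ℝ) ≤ 1/2) (by norm_num : (0:ℝ) ≤ 1/2) (by norm_num)
  simp only [Function.comp, smul_eq_mul] at h
  have hm : (1/2 : ℝ) * x + 1/2 * y = (x + y) / 2 := by ring
  rw [hm] at h
  have hmpos : 0 < (x + y) / 2 := by linarith
  have hGm := Real.Gamma_pos_of_pos hmpos
  have hGx := Real.Gamma_pos_of_pos hx
  have hGy := Real.Gamma_pos_of_pos hy
  have : Real.log (Real.Gamma ((x + y) / 2) ^ 2) ≤ Real.log (Real.Gamma x * Real.Gamma y) := by
    rw [Real.log_pow, Real.log_mul hGx.ne' hGy.ne']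
    push_cast
    linarith
  exact (Real.log_le_log_iff (by positivity) (by positivity)).mp this

/-- For `n ≥ 2`, the constant `c_n = √2 · Γ((n+1)/2)/Γ(n/2)` satisfies
`√(n-1) ≤ c_n ≤ √n`; equivalently `((n-1)/2)·Γ(n/2)² ≤ Γ((n+1)/2)² ≤ (n/2)·Γ(n/2)²`. -/
theorem gamma_ratio_bounds (n : ℕ) (hn : 2 ≤ n) :
    (Real.sqrt ((n : ℝ) - 1) ≤
        Real.sqrt 2 * Real.Gamma (((n : ℝ) + 1) / 2) / Real.Gamma ((n : ℝ) / 2) ∧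
      Real.sqrt 2 * Real.Gamma (((n : ℝ) + 1) / 2) / Real.Gamma ((n : ℝ) / 2) ≤
        Real.sqrt (n : ℝ)) ∧
    (((n : ℝ) - 1) / 2 * Real.Gamma ((n : ℝ) / 2) ^ 2 ≤ Real.Gamma (((n : ℝ) + 1) / 2) ^ 2 ∧
      Real.Gamma (((n : ℝ) + 1) / 2) ^ 2 ≤ (n : ℝ) / 2 * Real.Gamma ((n : ℝ) / 2) ^ 2) := by
  have hn2 : (2:ℝ) ≤ (n:ℝ) := by exact_mod_cast hn
  set A := Real.Gamma (((n : ℝ) + 1) / 2) with hA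
  set B := Real.Gamma ((n : ℝ) / 2) with hB
  have hApos : 0 < A := Real.Gamma_pos_of_pos (by linarith)
  have hBpos : 0 < B := Real.Gamma_pos_of_pos (by linarith)
  -- upper: A² ≤ Γ(n/2) Γ(n/2+1) = (n/2) B²
  have hrec1 : Real.Gamma ((n:ℝ)/2 + 1) = (n:ℝ)/2 * B := Real.Gamma_add_one (by positivity)
  have hup : A ^ 2 ≤ (n:ℝ)/2 * B ^ 2 := by
    have h := gamma_sq_midpoint_le ((n:ℝ)/2) ((n:ℝ)/2 + 1) (by linarith) (by linarith)
    have hm : ((n:ℝ)/2 + ((n:ℝ)/2 + 1)) / 2 = ((n:ℝ) + 1) / 2 := by ring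
    rw [hm, hrec1] at h
    nlinarith
  -- lower: B² ≤ Γ((n-1)/2) A, and A = ((n-1)/2) Γ((n-1)/2)
  have hx : (0:ℝ) < ((n:ℝ) - 1)/2 := by linarith
  have hrec2 : A = ((n:ℝ) - 1)/2 * Real.Gamma (((n:ℝ) - 1)/2) := by
    rw [hA]
    have : ((n:ℝ) + 1)/2 = ((n:ℝ) - 1)/2 + 1 := by ring
    rw [this, Real.Gamma_add_one hx.ne']
  have hlow : ((n:ℝ) - 1)/2 * B ^ 2 ≤ A ^ 2 := by
    have h := gamma_sq_midpoint_le (((n:ℝ)-1)/2) (((n:ℝ)+1)/2) hx (by linarith)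
    have hm : ((((n:ℝ)-1)/2 + ((n:ℝ)+1)/2)) / 2 = (n:ℝ)/2 := by ring
    rw [hm, ← hB, ← hA] at h
    have hGpos : 0 < Real.Gamma (((n:ℝ)-1)/2) := Real.Gamma_pos_of_pos hx
    nlinarith
  refine ⟨⟨?_, ?_⟩, hlow, hup⟩
  · have hc : 0 ≤ Real.sqrt 2 * A / B := by positivity
    have hsq : ((n:ℝ) - 1) ≤ (Real.sqrt 2 * A / B) ^ 2 := by
      rw [div_pow, mul_pow, Real.sq_sqrt (by norm_num : (0:ℝ) ≤ 2)]
      rw [le_div_iff₀ (by positivity)]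
      nlinarith
    calc Real.sqrt ((n:ℝ) - 1) ≤ Real.sqrt ((Real.sqrt 2 * A / B) ^ 2) :=
          Real.sqrt_le_sqrt hsq
      _ = Real.sqrt 2 * A / B := Real.sqrt_sq hc
  · have hsq : (Real.sqrt 2 * A / B) ^ 2 ≤ (n:ℝ) := by
      rw [div_pow, mul_pow, Real.sq_sqrt (by norm_num : (0:ℝ) ≤ 2)]
      rw [div_le_iff₀ (by positivity)]
      nlinarith
    calc Real.sqrt 2 * A / B = Real.sqrt ((Real.sqrt 2 * A / B) ^ 2) :=
          (Real.sqrt_sq (by positivity)).symm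
      _ ≤ Real.sqrt (n:ℝ) := Real.sqrt_le_sqrt hsq
end

section
/- There exists an absolute constant C > 0 such that for every integer n ≥ 3 and every real u ≥ 0, | (c_n / √(n−1)) · (max(1 − u²/(n−1), 0))^{(n−2)/2} − e^{−u²/2} | ≤ C/n, where c_n = √2 · Γ((n+1)/2) / Γ(n/2). -/
/-!
Put `m = n - 1` and `x = u² / m`. Log-convexity of `Γ` together with `Γ (s + 1) = s Γ s`
squeezes `c_n²` between `n - 1` and `n`, so `c_n / √m = 1 + O(1/n)`. It remains to compare
`(1 - x)₊ ^ ((m - 1) / 2)` with `exp (-m x / 2)`: from above through `1 - x ≤ exp (-x)`, from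
below through `exp (-(x + 2 x²)) ≤ 1 - x` for `x ≤ 1/2`. Both errors have the form
`yᵏ exp (-y) / m` with `y` comparable to `m x`, hence are `O(1/m)`; for `x > 1/2` both sides are
themselves `O(1/m)`.
-/

open Real

namespace Real

lemma Gamma_midpoint_sq_le {s t : ℝ} (hs : 0 < s) (ht : 0 < t) :
    Gamma ((s + t) / 2) ^ 2 ≤ Gamma s * Gamma t := by
  have h := Gamma_mul_add_mul_le_rpow_Gamma_mul_rpow_Gamma hs ht one_half_pos one_half_pos
    (add_halves 1)
  rw [← sqrt_eq_rpow, ← sqrt_eq_rpow, ← sqrt_mul (Gamma_pos_of_pos hs).le] at h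
  rw [show (s + t) / 2 = 1 / 2 * s + 1 / 2 * t by ring]
  calc Gamma (1 / 2 * s + 1 / 2 * t) ^ 2 ≤ √(Gamma s * Gamma t) ^ 2 :=
        pow_le_pow_left₀ (Gamma_pos_of_pos (by positivity)).le h 2
    _ = Gamma s * Gamma t :=
        sq_sqrt (mul_nonneg (Gamma_pos_of_pos hs).le (Gamma_pos_of_pos ht).le)

lemma Gamma_add_half_sq_le {x : ℝ} (hx : 0 < x) : Gamma (x + 1 / 2) ^ 2 ≤ x * Gamma x ^ 2 := by
  have h := Gamma_midpoint_sq_le hx (by linarith : 0 < x + 1)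
  rw [Gamma_add_one hx.ne', show (x + (x + 1)) / 2 = x + 1 / 2 by ring] at h
  exact h.trans_eq (by ring)

lemma sub_half_mul_Gamma_sq_le {x : ℝ} (hx : 1 / 2 < x) :
    (x - 1 / 2) * Gamma x ^ 2 ≤ Gamma (x + 1 / 2) ^ 2 := by
  have hx' : 0 < x - 1 / 2 := by linarith
  have h := Gamma_midpoint_sq_le hx' (by linarith : 0 < x + 1 / 2)
  have hrec : Gamma (x + 1 / 2) = (x - 1 / 2) * Gamma (x - 1 / 2) := by
    rw [← Gamma_add_one hx'.ne']; ring_nf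
  rw [show (x - 1 / 2 + (x + 1 / 2)) / 2 = x by ring] at h
  calc (x - 1 / 2) * Gamma x ^ 2 ≤ (x - 1 / 2) * (Gamma (x - 1 / 2) * Gamma (x + 1 / 2)) :=
        mul_le_mul_of_nonneg_left h hx'.le
    _ = Gamma (x + 1 / 2) ^ 2 := by rw [hrec]; ring

end Real

noncomputable def gammaHalfRatio (s : ℝ) : ℝ := √2 * Gamma ((s + 1) / 2) / Gamma (s / 2)

lemma gammaHalfRatio_sq {s : ℝ} :
    gammaHalfRatio s ^ 2 = 2 * Gamma (s / 2 + 1 / 2) ^ 2 / Gamma (s / 2) ^ 2 := by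
  rw [gammaHalfRatio, div_pow, mul_pow, sq_sqrt zero_le_two]
  ring_nf

lemma gammaHalfRatio_sq_le {s : ℝ} (hs : 0 < s) : gammaHalfRatio s ^ 2 ≤ s := by
  have h := Gamma_add_half_sq_le (by positivity : 0 < s / 2)
  rw [gammaHalfRatio_sq, div_le_iff₀ (pow_pos (Gamma_pos_of_pos (by positivity)) 2)]
  linarith

lemma sub_one_le_gammaHalfRatio_sq {s : ℝ} (hs : 1 < s) : s - 1 ≤ gammaHalfRatio s ^ 2 := by
  have h := sub_half_mul_Gamma_sq_le (by linarith : 1 / 2 < s / 2)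
  rw [gammaHalfRatio_sq, le_div_iff₀ (pow_pos (Gamma_pos_of_pos (by positivity)) 2)]
  linarith

lemma abs_gammaHalfRatio_div_sqrt_sub_one_le {s : ℝ} (hs : 1 < s) :
    |gammaHalfRatio s / √(s - 1) - 1| ≤ 1 / (s - 1) := by
  have hs' : 0 < s - 1 := by linarith
  have hc : 0 ≤ gammaHalfRatio s :=
    div_nonneg (mul_nonneg (sqrt_nonneg 2) (Gamma_pos_of_pos (by positivity)).le)
      (Gamma_pos_of_pos (by positivity)).le
  set r := gammaHalfRatio s / √(s - 1)
  have hr_sq : r ^ 2 = gammaHalfRatio s ^ 2 / (s - 1) := by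
    rw [div_pow, sq_sqrt hs'.le]
  have hr_sq_ge : 1 ≤ r ^ 2 := by
    rw [hr_sq, le_div_iff₀ hs', one_mul]; exact sub_one_le_gammaHalfRatio_sq hs
  have hr_sq_le : r ^ 2 ≤ 1 + 1 / (s - 1) := by
    rw [hr_sq, div_le_iff₀ hs', add_mul, one_div_mul_cancel hs'.ne']
    linarith [gammaHalfRatio_sq_le (by linarith : 0 < s)]
  have hr : 1 ≤ r := (one_le_sq_iff₀ (by positivity)).1 hr_sq_ge
  rw [abs_of_nonneg (by linarith)]
  nlinarith

lemma pow_mul_exp_neg_le_factorial {y : ℝ} (hy : 0 ≤ y) (k : ℕ) :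
    y ^ k * exp (-y) ≤ k.factorial := by
  have h := pow_div_factorial_le_exp y hy k
  rw [div_le_iff₀ (by positivity)] at h
  rw [exp_neg, ← div_eq_mul_inv, div_le_iff₀ (exp_pos y)]
  linarith

lemma max_one_sub_rpow_le_exp {p : ℝ} (hp : 0 ≤ p) (x : ℝ) :
    max (1 - x) 0 ^ p ≤ exp (-(p * x)) := by
  calc max (1 - x) 0 ^ p ≤ exp (-x) ^ p :=
        rpow_le_rpow (le_max_right _ _) (max_le (one_sub_le_exp_neg x) (exp_pos _).le) hp
    _ = exp (-(p * x)) := by rw [← exp_mul]; ring_nf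

lemma exp_neg_add_two_mul_sq_le_one_sub {x : ℝ} (hx : x ≤ 1 / 2) :
    exp (-(x + 2 * x ^ 2)) ≤ 1 - x := by
  rw [exp_neg, inv_le_iff_one_le_mul₀ (exp_pos _)]
  -- `(1 - x) (1 + x + 2 x²) = 1 + x² (1 - 2 x)`
  calc (1 : ℝ) ≤ (1 - x) * (1 + (x + 2 * x ^ 2)) := by nlinarith
    _ ≤ (1 - x) * exp (x + 2 * x ^ 2) := by
        gcongr
        · linarith
        · linarith [add_one_le_exp (x + 2 * x ^ 2)]

section TruncatedPower

variable {m x : ℝ}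

lemma max_one_sub_rpow_sub_exp_le (hm : 1 < m) (hx : 0 ≤ x) :
    max (1 - x) 0 ^ ((m - 1) / 2) - exp (-(m * x) / 2) ≤ 1 / (m - 1) := by
  set p := (m - 1) / 2 with hp_def
  have hp : 0 < p := by positivity
  have hsplit : exp (-(m * x) / 2) = exp (-(p * x)) * exp (-(x / 2)) := by
    rw [← exp_add, hp_def]; ring_nf
  have hgap : 1 - exp (-(x / 2)) ≤ x / 2 := by linarith [one_sub_le_exp_neg (x / 2)]
  calc max (1 - x) 0 ^ p - exp (-(m * x) / 2)
      ≤ exp (-(p * x)) - exp (-(m * x) / 2) := by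
        linarith [max_one_sub_rpow_le_exp hp.le x]
    _ = exp (-(p * x)) * (1 - exp (-(x / 2))) := by rw [hsplit]; ring
    _ ≤ exp (-(p * x)) * (x / 2) := by gcongr
    _ = (p * x) ^ 1 * exp (-(p * x)) / (2 * p) := by field_simp
    _ ≤ 1 / (2 * p) := by
        gcongr
        simpa using pow_mul_exp_neg_le_factorial (by positivity : 0 ≤ p * x) 1
    _ = 1 / (m - 1) := by ring

lemma exp_sub_max_one_sub_rpow_le (hm : 1 ≤ m) (hx : 0 ≤ x) :
    exp (-(m * x) / 2) - max (1 - x) 0 ^ ((m - 1) / 2) ≤ 8 / m := by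
  have hm₀ : 0 < m := by linarith
  have hh : 0 ≤ max (1 - x) 0 ^ ((m - 1) / 2) := rpow_nonneg (le_max_right _ _) _
  rcases le_or_gt x (1 / 2) with hx₂ | hx₂
  · set y := m * x / 2 with hy
    have hlow : exp (-(m * x) / 2) * (1 - m * x ^ 2) ≤ max (1 - x) 0 ^ ((m - 1) / 2) :=
      calc exp (-(m * x) / 2) * (1 - m * x ^ 2)
          ≤ exp (-(m * x) / 2) * exp (-(m * x ^ 2)) := by
            gcongr; linarith [one_sub_le_exp_neg (m * x ^ 2)]
        _ = exp (-(x + 2 * x ^ 2)) ^ (m / 2) := by rw [← exp_add, ← exp_mul]; ring_nf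
        _ ≤ exp (-(x + 2 * x ^ 2)) ^ ((m - 1) / 2) :=
            rpow_le_rpow_of_exponent_ge (exp_pos _) (exp_le_one_iff.2 (by nlinarith))
              (by linarith)
        _ ≤ (1 - x) ^ ((m - 1) / 2) :=
            rpow_le_rpow (exp_pos _).le (exp_neg_add_two_mul_sq_le_one_sub hx₂)
              (by linarith)
        _ = max (1 - x) 0 ^ ((m - 1) / 2) := by rw [max_eq_left (by linarith)]
    calc exp (-(m * x) / 2) - max (1 - x) 0 ^ ((m - 1) / 2)
        ≤ m * x ^ 2 * exp (-(m * x) / 2) := by linarith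
      _ = 4 / m * (y ^ 2 * exp (-y)) := by
          rw [hy, show -(m * x) / 2 = -(m * x / 2) by ring]; field_simp; ring
      _ ≤ 4 / m * (Nat.factorial 2) := by
          gcongr; exact pow_mul_exp_neg_le_factorial (by positivity) 2
      _ = 8 / m := by norm_num; ring
  · calc exp (-(m * x) / 2) - max (1 - x) 0 ^ ((m - 1) / 2)
        ≤ exp (-(m / 4)) := by linarith [exp_le_exp.2 (by nlinarith : -(m * x) / 2 ≤ -(m / 4))]
      _ = 4 / m * ((m / 4) ^ 1 * exp (-(m / 4))) := by field_simp
      _ ≤ 4 / m * (Nat.factorial 1) := by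
          gcongr; exact pow_mul_exp_neg_le_factorial (by positivity) 1
      _ ≤ 8 / m := by norm_num; gcongr; norm_num

lemma abs_max_one_sub_rpow_sub_exp_le (hm : 2 ≤ m) (hx : 0 ≤ x) :
    |max (1 - x) 0 ^ ((m - 1) / 2) - exp (-(m * x) / 2)| ≤ 8 / m := by
  have hm' : 1 / (m - 1) ≤ 8 / m := by
    rw [div_le_div_iff₀ (by linarith) (by linarith)]; linarith
  rw [abs_sub_le_iff]
  exact ⟨(max_one_sub_rpow_sub_exp_le (by linarith) hx).trans hm',
    exp_sub_max_one_sub_rpow_le (by linarith) hx⟩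

end TruncatedPower

/-- Uniform `O(1/n)` closeness of the (normalized) spherical density
to the Gaussian density. -/
theorem spherical_density_gaussian_approx :
    ∃ C : ℝ, 0 < C ∧ ∀ n : ℕ, 3 ≤ n → ∀ u : ℝ, 0 ≤ u →
      |Real.sqrt 2 * Real.Gamma (((n : ℝ) + 1) / 2) / Real.Gamma ((n : ℝ) / 2) /
            Real.sqrt ((n : ℝ) - 1) *
            (max (1 - u ^ 2 / ((n : ℝ) - 1)) 0) ^ (((n : ℝ) - 2) / 2)
          - Real.exp (-u ^ 2 / 2)| ≤ C / n := by
  refine ⟨18, by norm_num, fun n hn u _ => ?_⟩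
  have hn' : (3 : ℝ) ≤ n := by exact_mod_cast hn
  set m : ℝ := (n : ℝ) - 1 with hm_def
  have hm : 2 ≤ m := by linarith
  set x := u ^ 2 / m with hx_def
  have hx : 0 ≤ x := div_nonneg (sq_nonneg u) (by linarith)
  have hu : u ^ 2 = m * x := by rw [hx_def]; field_simp
  rw [show ((n : ℝ) - 2) / 2 = (m - 1) / 2 by ring, hu]
  set r := gammaHalfRatio n / √m
  set h := max (1 - x) 0 ^ ((m - 1) / 2)
  have hr : |r - 1| ≤ 1 / m := abs_gammaHalfRatio_div_sqrt_sub_one_le (by linarith)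
  have hh : |h| ≤ 1 := by
    rw [abs_of_nonneg (rpow_nonneg (le_max_right _ _) _)]
    exact (max_one_sub_rpow_le_exp (by linarith) x).trans
      (exp_le_one_iff.2 (neg_nonpos.2 (mul_nonneg (by linarith) hx)))
  calc |r * h - exp (-(m * x) / 2)| = |(r - 1) * h + (h - exp (-(m * x) / 2))| := by ring_nf
    _ ≤ |r - 1| * |h| + |h - exp (-(m * x) / 2)| := by rw [← abs_mul]; exact abs_add_le _ _
    _ ≤ 1 / m * 1 + 8 / m := by
        gcongr
        exact abs_max_one_sub_rpow_sub_exp_le hm hx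
    _ = 9 / m := by ring
    _ ≤ 18 / n := by rw [div_le_div_iff₀ (by linarith) (by linarith)]; linarith
end
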